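/- ∇ω = 0 (the structure (J,⟨·,·⟩) is Kähler) if and only if v₀ = 0, w₀ = 0, D_s = 0 and D_a∘J' = J'∘D_a (i.e. D ∈ u(n−1)). -/
import Mathlib


open scoped BigOperators
open Matrix

noncomputable section

/-- The underlying `2n`-dimensional real vector space `ℝ^{2n}`, whose standard basis
plays the role of the orthonormal basis `e₀, e₁, …, e_{2n-1}`. -/
abbrev G (n : ℕ) := Fin (2*n) → ℝ

/-- The inner product `⟨·,·⟩` making the standard basis orthonormal. -/
def inn {n : ℕ} (x y : G n) : ℝ := ∑ i, x i * y i

/-- The standard basis vector `e k` (indexed by a natural number `k`). -/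
def E (n : ℕ) (k : ℕ) : G n := fun i => if (i : ℕ) = k then 1 else 0

/-- Membership in `a = span{e₂, …, e_{2n-1}}`. -/
def inA {n : ℕ} (x : G n) : Prop := ∀ i : Fin (2*n), (i : ℕ) < 2 → x i = 0

/-- The orthogonal almost complex structure `J e_{2i} = e_{2i+1}`, `J e_{2i+1} = -e_{2i}`. -/
def Jm (n : ℕ) : Matrix (Fin (2*n)) (Fin (2*n)) ℝ :=
  Matrix.of fun k l =>
    if (k : ℕ) = (l : ℕ) + 1 ∧ Even (l : ℕ) then (1 : ℝ)
    else if (l : ℕ) = (k : ℕ) + 1 ∧ Even (k : ℕ) then -1 else 0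

/-- `D` is (the extension by zero of) an endomorphism of `a`: it vanishes on
`span{e₀, e₁}` and takes values orthogonal to `span{e₀, e₁}`. -/
def DinA {n : ℕ} (D : Matrix (Fin (2*n)) (Fin (2*n)) ℝ) : Prop :=
  ∀ k l : Fin (2*n), ((k : ℕ) < 2 ∨ (l : ℕ) < 2) → D k l = 0

/-- The matrix of `L` determined by the data `μ, v₀, w₀, D`, i.e.
`L e₀ = 0`, `L e₁ = μ e₁ + v₀` and `L x = ⟨w₀, x⟩ e₁ + D x` for `x ∈ a`
(for `v₀, w₀ ∈ a` and `D` an endomorphism of `a`). -/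
def Lm {n : ℕ} (μ : ℝ) (v₀ w₀ : G n) (D : Matrix (Fin (2*n)) (Fin (2*n)) ℝ) :
    Matrix (Fin (2*n)) (Fin (2*n)) ℝ :=
  Matrix.of fun k l =>
    (if (k : ℕ) = 1 ∧ (l : ℕ) = 1 then μ else 0)
      + (if (l : ℕ) = 1 then v₀ k else 0)
      + (if (k : ℕ) = 1 then w₀ l else 0)
      + D k l

/-- The Lie bracket of the almost abelian Lie algebra `g = ℝ e₀ ⋉_L u`:
`[e₀, u] = L u` for `u ∈ u = span{e₁, …, e_{2n-1}}` and `[u, v] = 0` for `u, v ∈ u`. -/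
def br {n : ℕ} (L : Matrix (Fin (2*n)) (Fin (2*n)) ℝ) (x y : G n) : G n :=
  inn x (E n 0) • L.mulVec y - inn y (E n 0) • L.mulVec x

/-- `nabla` is the Levi-Civita connection of `⟨·,·⟩`, i.e. it satisfies the Koszul
formula `2⟨∇_x y, z⟩ = ⟨[x,y],z⟩ − ⟨[y,z],x⟩ + ⟨[z,x],y⟩`. -/
def Koszul {n : ℕ} (L : Matrix (Fin (2*n)) (Fin (2*n)) ℝ) (nabla : G n → G n → G n) : Prop :=
  ∀ x y z : G n, 2 * inn (nabla x y) z
    = inn (br L x y) z - inn (br L y z) x + inn (br L z x) y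

/-- `(∇_y J)(x) = ∇_y (Jx) − J ∇_y x`. -/
def covJ {n : ℕ} (nabla : G n → G n → G n) (y x : G n) : G n :=
  nabla y ((Jm n).mulVec x) - (Jm n).mulVec (nabla y x)

/-- The rough Laplacian
`(∇*∇J)(x) = Σ_i ((∇_{e_i}(∇_{e_i}J))(x) − (∇_{∇_{e_i}e_i} J)(x))`. -/
def roughLap {n : ℕ} (nabla : G n → G n → G n) (x : G n) : G n :=
  ∑ i : Fin (2*n),
    (nabla (E n i.val) (covJ nabla (E n i.val) x)
      - covJ nabla (E n i.val) (nabla (E n i.val) x)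
      - covJ nabla (nabla (E n i.val) (E n i.val)) x)

/-- `J` is harmonic: `J ∘ (∇*∇J) = (∇*∇J) ∘ J`. -/
def Harmonic {n : ℕ} (nabla : G n → G n → G n) : Prop :=
  ∀ x : G n, (Jm n).mulVec (roughLap nabla x) = roughLap nabla ((Jm n).mulVec x)

/-- Symmetric part of a matrix. -/
def symPart {n : ℕ} (M : Matrix (Fin (2*n)) (Fin (2*n)) ℝ) :
    Matrix (Fin (2*n)) (Fin (2*n)) ℝ := (1/2 : ℝ) • (M + Mᵀ)

/-- Skew-symmetric part of a matrix. -/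
def skewPart {n : ℕ} (M : Matrix (Fin (2*n)) (Fin (2*n)) ℝ) :
    Matrix (Fin (2*n)) (Fin (2*n)) ℝ := (1/2 : ℝ) • (M - Mᵀ)

/-- `γ = (v₀ + w₀)/2`. -/
def gam {n : ℕ} (v₀ w₀ : G n) : G n := (1/2 : ℝ) • (v₀ + w₀)

/-- `ρ = (v₀ − w₀)/2`. -/
def rho {n : ℕ} (v₀ w₀ : G n) : G n := (1/2 : ℝ) • (v₀ - w₀)

/-- The fundamental 2-form `ω(x,y) = ⟨Jx, y⟩`. -/
def om {n : ℕ} (x y : G n) : ℝ := inn ((Jm n).mulVec x) y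

/-- `(∇_x ω)(y,z) = −ω(∇_x y, z) − ω(y, ∇_x z)`. -/
def nablaOm {n : ℕ} (nabla : G n → G n → G n) (x y z : G n) : ℝ :=
  - om (nabla x y) z - om y (nabla x z)

/-- `dω(x,y,z) = −ω([x,y],z) − ω([y,z],x) − ω([z,x],y)`. -/
def dOm {n : ℕ} (L : Matrix (Fin (2*n)) (Fin (2*n)) ℝ) (x y z : G n) : ℝ :=
  - om (br L x y) z - om (br L y z) x - om (br L z x) y

/-- The codifferential `δω(x) = −Σ_i (∇_{e_i}ω)(e_i, x)`. -/
def deltaOm {n : ℕ} (nabla : G n → G n → G n) (x : G n) : ℝ :=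
  - ∑ i : Fin (2*n), nablaOm nabla (E n i.val) (E n i.val) x

/-- The Nijenhuis tensor `N(x,y) = [x,y] + J([Jx,y] + [x,Jy]) − [Jx,Jy]`. -/
def Nij {n : ℕ} (L : Matrix (Fin (2*n)) (Fin (2*n)) ℝ) (x y : G n) : G n :=
  br L x y
    + (Jm n).mulVec (br L ((Jm n).mulVec x) y + br L x ((Jm n).mulVec y))
    - br L ((Jm n).mulVec x) ((Jm n).mulVec y)

/-- `T⁻(x,y,z) = (∇_x ω)(y,z) − (∇_{Jx} ω)(Jy,z)`. -/
def Tminus {n : ℕ} (nabla : G n → G n → G n) (x y z : G n) : ℝ :=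
  nablaOm nabla x y z - nablaOm nabla ((Jm n).mulVec x) ((Jm n).mulVec y) z

/-- `T⁺(x,y,z) = (∇_x ω)(y,z) + (∇_{Jx} ω)(Jy,z)`. -/
def Tplus {n : ℕ} (nabla : G n → G n → G n) (x y z : G n) : ℝ :=
  nablaOm nabla x y z + nablaOm nabla ((Jm n).mulVec x) ((Jm n).mulVec y) z

/-- `U(x,y,z) = ⟨x,y⟩δω(z) − ⟨x,z⟩δω(y) − ⟨x,Jy⟩δω(Jz) + ⟨x,Jz⟩δω(Jy)`. -/
def Uten {n : ℕ} (nabla : G n → G n → G n) (x y z : G n) : ℝ :=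
  inn x y * deltaOm nabla z - inn x z * deltaOm nabla y
    - inn x ((Jm n).mulVec y) * deltaOm nabla ((Jm n).mulVec z)
    + inn x ((Jm n).mulVec z) * deltaOm nabla ((Jm n).mulVec y)

/-- The Lee form `θ(x) = −(1/(n−1)) δω(Jx)`. -/
def Lee {n : ℕ} (nabla : G n → G n → G n) (x : G n) : ℝ :=
  -(1/((n : ℝ) - 1)) * deltaOm nabla ((Jm n).mulVec x)

/-- The identity of `a`, extended by zero to `g`. -/
def Ia (n : ℕ) : Matrix (Fin (2*n)) (Fin (2*n)) ℝ :=
  Matrix.of fun k l => if k = l ∧ 2 ≤ (k : ℕ) then (1 : ℝ) else 0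



/-! ### Auxiliary lemmas -/

lemma inn_eq {n : ℕ} (x y : G n) : inn x y = x ⬝ᵥ y := rfl

lemma E_eq {n : ℕ} (k : ℕ) (hk : k < 2*n) :
    E n k = fun i => if i = ⟨k, hk⟩ then 1 else 0 := by
  funext i; simp [E, Fin.ext_iff]

lemma dot_E {n : ℕ} (x : G n) (k : ℕ) (hk : k < 2*n) : x ⬝ᵥ E n k = x ⟨k, hk⟩ := by
  simp [dotProduct, E_eq k hk]

lemma E_dot {n : ℕ} (x : G n) (k : ℕ) (hk : k < 2*n) : E n k ⬝ᵥ x = x ⟨k, hk⟩ := by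
  rw [dotProduct_comm, dot_E]

lemma mulVec_E {n : ℕ} (M : Matrix (Fin (2*n)) (Fin (2*n)) ℝ) (k : ℕ) (hk : k < 2*n) :
    M.mulVec (E n k) = fun i => M i ⟨k, hk⟩ := by
  funext i
  simpa [Matrix.mulVec, dotProduct] using dot_E (fun j => M i j) k hk

lemma Jm_transpose {n : ℕ} : (Jm n)ᵀ = -(Jm n) := by
  ext k l
  simp only [Matrix.transpose_apply, Jm, Matrix.neg_apply, Matrix.of_apply]
  simp only [Nat.even_iff]
  split_ifs with h1 h2 h3 <;> (try norm_num) <;> omega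

lemma dot_J {n : ℕ} (u v : G n) : (Jm n).mulVec u ⬝ᵥ v = -(u ⬝ᵥ (Jm n).mulVec v) := by
  have h : (Jm n).mulVec u ⬝ᵥ v = u ⬝ᵥ (Jm n)ᵀ.mulVec v := by
    rw [Matrix.dotProduct_mulVec, Matrix.vecMul_transpose]
  rw [h, Jm_transpose, Matrix.neg_mulVec, dotProduct_neg]

lemma J_col_even {n : ℕ} (k : ℕ) (hk : Even k) (hk1 : k + 1 < 2*n) :
    (Jm n).mulVec (E n k) = E n (k+1) := by
  rw [mulVec_E _ k (by omega)]
  funext i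
  simp only [Jm, Matrix.of_apply, E]
  rw [Nat.even_iff] at hk
  simp only [Nat.even_iff]
  split_ifs with h1 h2 h3 <;> (try norm_num) <;> omega

lemma J_col_odd {n : ℕ} (k : ℕ) (hk : Even k) (hk1 : k + 1 < 2*n) :
    (Jm n).mulVec (E n (k+1)) = -E n k := by
  rw [mulVec_E _ (k+1) hk1]
  funext i
  simp only [Jm, Matrix.of_apply, E, Pi.neg_apply]
  rw [Nat.even_iff] at hk
  simp only [Nat.even_iff]
  split_ifs with h1 h2 h3 <;> (try norm_num) <;> omega

lemma J_app0 {n : ℕ} (hn : 1 ≤ n) (z : G n) :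
    (Jm n).mulVec z ⟨0, by omega⟩ = -z ⟨1, by omega⟩ := by
  have h : (fun l => Jm n ⟨0, by omega⟩ l) = -E n 1 := by
    funext l
    by_cases hl : (l:ℕ) = 1 <;> simp [Jm, E, hl]
  calc (Jm n).mulVec z ⟨0, by omega⟩ = (fun l => Jm n ⟨0, by omega⟩ l) ⬝ᵥ z := rfl
  _ = (-E n 1) ⬝ᵥ z := by rw [h]
  _ = -z ⟨1, by omega⟩ := by rw [neg_dotProduct, E_dot]

lemma J_app1 {n : ℕ} (hn : 1 ≤ n) (z : G n) :
    (Jm n).mulVec z ⟨1, by omega⟩ = z ⟨0, by omega⟩ := by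
  have h : (fun l => Jm n ⟨1, by omega⟩ l) = E n 0 := by
    funext l
    by_cases hl : (l:ℕ) = 0 <;> simp [Jm, E, hl]
  calc (Jm n).mulVec z ⟨1, by omega⟩ = (fun l => Jm n ⟨1, by omega⟩ l) ⬝ᵥ z := rfl
  _ = E n 0 ⬝ᵥ z := by rw [h]
  _ = z ⟨0, by omega⟩ := by rw [E_dot]

lemma Lm_mulVec {n : ℕ} (h1 : 1 < 2*n) (μ : ℝ) (v₀ w₀ : G n)
    (D : Matrix (Fin (2*n)) (Fin (2*n)) ℝ) (u : G n) :
    (Lm μ v₀ w₀ D).mulVec u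
      = u ⟨1, h1⟩ • v₀ + (μ * u ⟨1, h1⟩ + w₀ ⬝ᵥ u) • E n 1 + D.mulVec u := by
  have hc : ∀ l : Fin (2*n), ((l:ℕ) = 1) = (l = ⟨1,h1⟩) := by
    intro l; simp [Fin.ext_iff]
  funext i
  simp only [Matrix.mulVec, dotProduct, Lm, Matrix.of_apply, add_mul,
    Finset.sum_add_distrib, hc]
  simp [hc, ite_and, ite_mul, E, Pi.add_apply, Pi.smul_apply, dotProduct,
    Matrix.mulVec, mul_comm]
  split_ifs with h <;> ring

lemma Lm_dot {n : ℕ} (h1 : 1 < 2*n) (μ : ℝ) (v₀ w₀ : G n)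
    (D : Matrix (Fin (2*n)) (Fin (2*n)) ℝ) (u v : G n) :
    (Lm μ v₀ w₀ D).mulVec u ⬝ᵥ v
      = u ⟨1, h1⟩ * (v₀ ⬝ᵥ v) + (μ * u ⟨1, h1⟩ + w₀ ⬝ᵥ u) * v ⟨1, h1⟩
        + D.mulVec u ⬝ᵥ v := by
  rw [Lm_mulVec h1, add_dotProduct, add_dotProduct,
    smul_dotProduct, smul_dotProduct, E_dot _ 1 h1]
  simp [smul_eq_mul]

lemma D_app {n : ℕ} {D : Matrix (Fin (2*n)) (Fin (2*n)) ℝ} (hD : DinA D)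
    (u : G n) (i : Fin (2*n)) (hi : (i:ℕ) < 2) : D.mulVec u i = 0 := by
  show (fun j => D i j) ⬝ᵥ u = 0
  apply Finset.sum_eq_zero
  intro l _
  show D i l * u l = 0
  rw [hD i l (Or.inl hi), zero_mul]

lemma D_col {n : ℕ} {D : Matrix (Fin (2*n)) (Fin (2*n)) ℝ} (hD : DinA D)
    (k : ℕ) (hk : k < 2*n) (hk2 : k < 2) : D.mulVec (E n k) = 0 := by
  rw [mulVec_E _ k hk]
  funext i
  exact hD i ⟨k, hk⟩ (Or.inr hk2)

/-- The Koszul right-hand side. -/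
def Kf {n : ℕ} (L : Matrix (Fin (2*n)) (Fin (2*n)) ℝ) (x y z : G n) : ℝ :=
  inn (br L x y) z - inn (br L y z) x + inn (br L z x) y

lemma key_lemma {n : ℕ} (L : Matrix (Fin (2*n)) (Fin (2*n)) ℝ)
    (nabla : G n → G n → G n) (hK : Koszul L nabla) (x y z : G n) :
    2 * nablaOm nabla x y z
      = Kf L x y ((Jm n).mulVec z) - Kf L x z ((Jm n).mulVec y) := by
  have hxy := hK x y ((Jm n).mulVec z)
  have hxz := hK x z ((Jm n).mulVec y)
  have e1 : (Jm n).mulVec (nabla x y) ⬝ᵥ z = -((nabla x y) ⬝ᵥ (Jm n).mulVec z) :=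
    dot_J _ _
  have e2 : (Jm n).mulVec y ⬝ᵥ (nabla x z) = (nabla x z) ⬝ᵥ (Jm n).mulVec y :=
    dotProduct_comm _ _
  simp only [nablaOm, om, inn_eq, Kf] at *
  rw [e1, e2]
  linarith

lemma Kf_expand {n : ℕ} (h0 : 0 < 2*n) (L : Matrix (Fin (2*n)) (Fin (2*n)) ℝ)
    (x y z : G n) :
    Kf L x y z
      = x ⟨0,h0⟩ * (L.mulVec y ⬝ᵥ z) - y ⟨0,h0⟩ * (L.mulVec x ⬝ᵥ z)
        - y ⟨0,h0⟩ * (L.mulVec z ⬝ᵥ x) + z ⟨0,h0⟩ * (L.mulVec y ⬝ᵥ x)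
        + z ⟨0,h0⟩ * (L.mulVec x ⬝ᵥ y) - x ⟨0,h0⟩ * (L.mulVec z ⬝ᵥ y) := by
  unfold Kf br
  simp only [inn_eq, dot_E _ 0 h0, sub_dotProduct, smul_dotProduct,
    smul_eq_mul]
  ring

/-- `∇ω = 0` (Kähler) iff `v₀ = 0`, `w₀ = 0`, `D_s = 0` and
`D_a J' = J' D_a` (i.e. `D ∈ u(n-1)`). -/
theorem statement6 (n : ℕ) (hn : 2 ≤ n) (μ : ℝ) (v₀ w₀ : G n) (hv : inA v₀) (hw : inA w₀)
    (D : Matrix (Fin (2*n)) (Fin (2*n)) ℝ) (hD : DinA D)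
    (nabla : G n → G n → G n) (hK : Koszul (Lm μ v₀ w₀ D) nabla) :
    (∀ x y z : G n, nablaOm nabla x y z = 0)
      ↔ (v₀ = 0 ∧ w₀ = 0 ∧ symPart D = 0
          ∧ (∀ x : G n, inA x → (skewPart D).mulVec ((Jm n).mulVec x) = (Jm n).mulVec ((skewPart D).mulVec x))) := by
  have h0 : 0 < 2*n := by omega
  have h1 : 1 < 2*n := by omega
  have hn1 : 1 ≤ n := by omega
  have key := key_lemma (Lm μ v₀ w₀ D) nabla hK
  have hJ0 : (Jm n).mulVec (E n 0) = E n 1 := by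
    simpa using J_col_even 0 (by norm_num) (by omega)
  have hJ1 : (Jm n).mulVec (E n 1) = -E n 0 := by
    simpa using J_col_odd 0 (by norm_num) (by omega)
  have hDapp0 : ∀ u : G n, D.mulVec u ⟨0, h0⟩ = 0 := fun u => D_app hD u _ (by norm_num)
  have hDapp1 : ∀ u : G n, D.mulVec u ⟨1, h1⟩ = 0 := fun u => D_app hD u _ (by norm_num)
  have hDJapp0 : ∀ u : G n, ((D * Jm n).mulVec u) ⟨0, h0⟩ = 0 := fun u => by
    rw [← Matrix.mulVec_mulVec]; exact D_app hD _ _ (by norm_num)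
  have hDJapp1 : ∀ u : G n, ((D * Jm n).mulVec u) ⟨1, h1⟩ = 0 := fun u => by
    rw [← Matrix.mulVec_mulVec]; exact D_app hD _ _ (by norm_num)
  have hJa0 : ∀ u : G n, (Jm n).mulVec u ⟨0, h0⟩ = -u ⟨1, h1⟩ := fun u => J_app0 hn1 u
  have hJa1 : ∀ u : G n, (Jm n).mulVec u ⟨1, h1⟩ = u ⟨0, h0⟩ := fun u => J_app1 hn1 u
  have hv1 : v₀ ⟨1, h1⟩ = 0 := hv _ (by norm_num)
  have hv0' : v₀ ⟨0, h0⟩ = 0 := hv _ (by norm_num)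
  have hw1 : w₀ ⟨1, h1⟩ = 0 := hw _ (by norm_num)
  have hw0' : w₀ ⟨0, h0⟩ = 0 := hw _ (by norm_num)
  constructor
  · intro h
    have hF : ∀ x y z : G n, Kf (Lm μ v₀ w₀ D) x y ((Jm n).mulVec z)
        - Kf (Lm μ v₀ w₀ D) x z ((Jm n).mulVec y) = 0 := by
      intro x y z
      have := key x y z
      rw [h x y z] at this
      linarith
    -- Step A : v₀ + w₀ = 0 componentwise
    have hA : ∀ z : G n, v₀ ⬝ᵥ z + w₀ ⬝ᵥ z = 0 := by
      intro z
      have hz := hF (E n 1) (E n 1) z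
      rw [Kf_expand h0, Kf_expand h0, hJ1] at hz
      simp [Lm_dot h1, Lm_mulVec h1, Matrix.mulVec_neg, neg_dotProduct,
        dotProduct_neg, D_col hD 0 (by omega) (by norm_num),
        D_col hD 1 (by omega) (by norm_num), hJa0, hJa1,
        dot_E _ 0 h0, dot_E _ 1 h1, E_dot _ 0 h0, E_dot _ 1 h1, hDapp0, hDapp1,
        zero_dotProduct, dotProduct_zero, E, hv1, hv0', hw1, hw0'] at hz
      linarith [hz]
    -- Step B : v₀ - w₀ = 0 against J z
    have hB : ∀ z : G n, v₀ ⬝ᵥ ((Jm n).mulVec z) - w₀ ⬝ᵥ ((Jm n).mulVec z) = 0 := by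
      intro z
      have hz := hF (E n 0) (E n 1) z
      rw [Kf_expand h0, Kf_expand h0, hJ1] at hz
      simp [Lm_dot h1, Lm_mulVec h1, Matrix.mulVec_neg, neg_dotProduct,
        dotProduct_neg, D_col hD 0 (by omega) (by norm_num),
        D_col hD 1 (by omega) (by norm_num), hJa0, hJa1,
        dot_E _ 0 h0, dot_E _ 1 h1, E_dot _ 0 h0, E_dot _ 1 h1, hDapp0, hDapp1,
        zero_dotProduct, dotProduct_zero, E, hv1, hv0', hw1, hw0', hDJapp0, hDJapp1] at hz
      linarith [hz]
    -- componentwise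
    have hvw : ∀ k : Fin (2*n), v₀ k + w₀ k = 0 := by
      intro k
      have ha := hA (E n (k:ℕ))
      rwa [dot_E _ _ k.isLt, dot_E _ _ k.isLt, Fin.eta] at ha
    have hvw2 : ∀ k : Fin (2*n), v₀ k - w₀ k = 0 := by
      intro k
      rcases Nat.even_or_odd (k:ℕ) with hk | hk
      · have hlt : (k:ℕ)+1 < 2*n := by
          rcases hk with ⟨m, hm⟩; have := k.isLt; omega
        have hb := hB (E n ((k:ℕ)+1))
        rw [J_col_odd _ hk hlt, dotProduct_neg, dotProduct_neg,
          dot_E _ _ k.isLt, dot_E _ _ k.isLt, Fin.eta] at hb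
        linarith
      · obtain ⟨m, hm⟩ := hk
        have hlt : 2*m+1 < 2*n := by have := k.isLt; omega
        have hkeq : (⟨2*m+1, hlt⟩ : Fin (2*n)) = k := by
          apply Fin.ext; simp [hm]
        have hb := hB (E n (2*m))
        rw [J_col_even (2*m) (even_two_mul m) hlt,
          dot_E _ _ hlt, dot_E _ _ hlt, hkeq] at hb
        linarith
    have hv0 : v₀ = 0 := by
      funext k
      have := hvw k; have := hvw2 k
      simp only [Pi.zero_apply]; linarith
    have hw0 : w₀ = 0 := by
      funext k
      have := hvw k; have := hvw2 k
      simp only [Pi.zero_apply]; linarith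
    rw [hv0, hw0] at hF
    -- Step C : symmetric part vanishes
    have hC : ∀ x z : G n, D.mulVec z ⬝ᵥ x + D.mulVec x ⬝ᵥ z = 0 := by
      intro x z
      have hz := hF x (E n 1) z
      rw [Kf_expand h0, Kf_expand h0, hJ1] at hz
      simp [Lm_dot h1, Lm_mulVec h1, Matrix.mulVec_neg, neg_dotProduct,
        dotProduct_neg, D_col hD 0 (by omega) (by norm_num),
        D_col hD 1 (by omega) (by norm_num), hJa0, hJa1,
        dot_E _ 0 h0, dot_E _ 1 h1, E_dot _ 0 h0, E_dot _ 1 h1, hDapp0, hDapp1,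
        zero_dotProduct, dotProduct_zero, E,
        hDJapp0, hDJapp1] at hz
      linarith [hz]
    have hsym : symPart D = 0 := by
      ext k l
      have hc := hC (E n (k:ℕ)) (E n (l:ℕ))
      rw [mulVec_E _ _ l.isLt, mulVec_E _ _ k.isLt, dot_E _ _ k.isLt, dot_E _ _ l.isLt] at hc
      simp only [Fin.eta] at hc
      simp only [symPart, Matrix.smul_apply, Matrix.add_apply, Matrix.transpose_apply,
        Matrix.zero_apply, smul_eq_mul]
      linarith
    have hDT : Dᵀ = -D := by
      ext k l
      have hc := congrFun (congrFun hsym k) l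
      simp only [symPart, Matrix.smul_apply, Matrix.add_apply, Matrix.transpose_apply,
        Matrix.zero_apply, smul_eq_mul] at hc
      simp only [Matrix.transpose_apply, Matrix.neg_apply]
      linarith
    have hskew : ∀ u v : G n, D.mulVec u ⬝ᵥ v = -(D.mulVec v ⬝ᵥ u) := by
      intro u v
      calc D.mulVec u ⬝ᵥ v = u ⬝ᵥ Dᵀ.mulVec v := by
            rw [Matrix.dotProduct_mulVec, Matrix.vecMul_transpose]
        _ = -(D.mulVec v ⬝ᵥ u) := by
            rw [hDT, Matrix.neg_mulVec, dotProduct_neg, dotProduct_comm]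
    have hcom : ∀ y z : G n, D.mulVec y ⬝ᵥ ((Jm n).mulVec z)
        = D.mulVec z ⬝ᵥ ((Jm n).mulVec y) := by
      intro y z
      have hz := hF (E n 0) y z
      rw [Kf_expand h0, Kf_expand h0] at hz
      simp [Lm_dot h1, Lm_mulVec h1, Matrix.mulVec_neg, neg_dotProduct,
        dotProduct_neg, D_col hD 0 (by omega) (by norm_num),
        D_col hD 1 (by omega) (by norm_num), hJa0, hJa1,
        dot_E _ 0 h0, dot_E _ 1 h1, E_dot _ 0 h0, E_dot _ 1 h1, hDapp0, hDapp1,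
        zero_dotProduct, dotProduct_zero, E,
        hDJapp0, hDJapp1] at hz
      have e1 : (D * Jm n) *ᵥ z ⬝ᵥ y = -(D.mulVec y ⬝ᵥ ((Jm n).mulVec z)) := by
        rw [← Matrix.mulVec_mulVec]; exact hskew _ _
      have e2 : (D * Jm n) *ᵥ y ⬝ᵥ z = -(D.mulVec z ⬝ᵥ ((Jm n).mulVec y)) := by
        rw [← Matrix.mulVec_mulVec]; exact hskew _ _
      rw [e1, e2] at hz
      linarith [hz]
    refine ⟨hv0, hw0, hsym, ?_⟩
    intro x _
    have hsD : skewPart D = D := by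
      rw [skewPart, hDT]
      ext k l
      simp only [Matrix.smul_apply, Matrix.sub_apply, Matrix.neg_apply, smul_eq_mul]
      ring
    rw [hsD]
    funext k
    have hL : ∀ f : G n, f ⬝ᵥ E n (k:ℕ) = f k := by
      intro f; rw [dot_E _ _ k.isLt, Fin.eta]
    calc (D.mulVec ((Jm n).mulVec x)) k
        = D.mulVec ((Jm n).mulVec x) ⬝ᵥ E n (k:ℕ) := (hL _).symm
      _ = -(D.mulVec (E n (k:ℕ)) ⬝ᵥ ((Jm n).mulVec x)) := hskew _ _
      _ = -(D.mulVec x ⬝ᵥ ((Jm n).mulVec (E n (k:ℕ)))) := by rw [hcom (E n (k:ℕ)) x]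
      _ = (Jm n).mulVec (D.mulVec x) ⬝ᵥ E n (k:ℕ) := (dot_J _ _).symm ▸ rfl
      _ = ((Jm n).mulVec (D.mulVec x)) k := hL _
  · rintro ⟨hv0, hw0, hsym, hcm⟩
    subst hv0; subst hw0
    have hDT : Dᵀ = -D := by
      ext k l
      have hc := congrFun (congrFun hsym k) l
      simp only [symPart, Matrix.smul_apply, Matrix.add_apply, Matrix.transpose_apply,
        Matrix.zero_apply, smul_eq_mul] at hc
      simp only [Matrix.transpose_apply, Matrix.neg_apply]
      linarith
    have hskew : ∀ u v : G n, D.mulVec u ⬝ᵥ v = -(D.mulVec v ⬝ᵥ u) := by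
      intro u v
      calc D.mulVec u ⬝ᵥ v = u ⬝ᵥ Dᵀ.mulVec v := by
            rw [Matrix.dotProduct_mulVec, Matrix.vecMul_transpose]
        _ = -(D.mulVec v ⬝ᵥ u) := by
            rw [hDT, Matrix.neg_mulVec, dotProduct_neg, dotProduct_comm]
    have hsD : skewPart D = D := by
      rw [skewPart, hDT]
      ext k l
      simp only [Matrix.smul_apply, Matrix.sub_apply, Matrix.neg_apply, smul_eq_mul]
      ring
    rw [hsD] at hcm
    have hmat : D * Jm n = Jm n * D := by
      ext k l
      have hcol : D.mulVec ((Jm n).mulVec (E n (l:ℕ)))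
          = (Jm n).mulVec (D.mulVec (E n (l:ℕ))) := by
        by_cases hl2 : (l:ℕ) < 2
        · have : (l:ℕ) = 0 ∨ (l:ℕ) = 1 := by omega
          rcases this with hl | hl
          · rw [hl, show (Jm n).mulVec (E n 0) = E n 1 from by
                simpa using J_col_even 0 (by norm_num) (by omega),
              D_col hD 1 (by omega) (by norm_num), D_col hD 0 (by omega) (by norm_num),
              Matrix.mulVec_zero]
          · rw [hl, show (Jm n).mulVec (E n 1) = -E n 0 from by
                simpa using J_col_odd 0 (by norm_num) (by omega),
              Matrix.mulVec_neg, D_col hD 0 (by omega) (by norm_num),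
              D_col hD 1 (by omega) (by norm_num), Matrix.mulVec_zero, neg_zero]
        · exact hcm _ (fun i hi => by
            simp only [E]
            split_ifs with hh
            · omega
            · rfl)
      have hce := congrFun hcol k
      rw [Matrix.mulVec_mulVec, Matrix.mulVec_mulVec, mulVec_E _ _ l.isLt,
        mulVec_E _ _ l.isLt] at hce
      simpa [Fin.eta] using hce
    have h7 : ∀ y z : G n, D.mulVec y ⬝ᵥ ((Jm n).mulVec z)
        = D.mulVec z ⬝ᵥ ((Jm n).mulVec y) := by
      intro y z
      have e1 : D.mulVec y ⬝ᵥ ((Jm n).mulVec z) = -((Jm n).mulVec (D.mulVec y) ⬝ᵥ z) := by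
        rw [dot_J]; ring
      rw [e1, Matrix.mulVec_mulVec, ← hmat, ← Matrix.mulVec_mulVec, hskew]
      ring
    intro x y z
    have h2 := key x y z
    have hsf : Kf (Lm μ 0 0 D) x y ((Jm n).mulVec z)
        - Kf (Lm μ 0 0 D) x z ((Jm n).mulVec y) = 0 := by
      rw [Kf_expand h0, Kf_expand h0]
      simp [Lm_dot h1, Lm_mulVec h1, Matrix.mulVec_neg, neg_dotProduct,
        dotProduct_neg, hJa0, hJa1,
        dot_E _ 0 h0, dot_E _ 1 h1, E_dot _ 0 h0, E_dot _ 1 h1, hJa0, hJa1,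
        zero_dotProduct, dotProduct_zero]
      have g1 : (D * Jm n) *ᵥ z ⬝ᵥ x = -(D.mulVec x ⬝ᵥ ((Jm n).mulVec z)) := by
        rw [← Matrix.mulVec_mulVec]; exact hskew _ _
      have g2 : (D * Jm n) *ᵥ z ⬝ᵥ y = -(D.mulVec y ⬝ᵥ ((Jm n).mulVec z)) := by
        rw [← Matrix.mulVec_mulVec]; exact hskew _ _
      have g3 : (D * Jm n) *ᵥ y ⬝ᵥ x = -(D.mulVec x ⬝ᵥ ((Jm n).mulVec y)) := by
        rw [← Matrix.mulVec_mulVec]; exact hskew _ _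
      have g4 : (D * Jm n) *ᵥ y ⬝ᵥ z = -(D.mulVec z ⬝ᵥ ((Jm n).mulVec y)) := by
        rw [← Matrix.mulVec_mulVec]; exact hskew _ _
      have g5 : D.mulVec y ⬝ᵥ x = -(D.mulVec x ⬝ᵥ y) := hskew _ _
      have g6 : D.mulVec z ⬝ᵥ x = -(D.mulVec x ⬝ᵥ z) := hskew _ _
      have g7 : D.mulVec y ⬝ᵥ ((Jm n).mulVec z) = D.mulVec z ⬝ᵥ ((Jm n).mulVec y) :=
        h7 y z
      linear_combination (-(y ⟨0,h0⟩))*g1 + (-(x ⟨0,h0⟩))*g2 + (z ⟨0,h0⟩)*g3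
        + (x ⟨0,h0⟩)*g4 + (-(z ⟨1,h1⟩))*g5 + (y ⟨1,h1⟩)*g6 + (2*(x ⟨0,h0⟩))*g7
    rw [hsf] at h2
    linarith
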